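/- arXiv:0710.5669 — 2 statements merged into one kernel-verified Lean document; each statement's English description precedes it below -/
import Mathlib

section
/- For any graph G on n vertices, E(G) ≤ (n/2)(1 + √n), where E(G) is the sum of the absolute values of the adjacency eigenvalues. -/
open Matrix Finset

variable {n : ℕ}

section general
variable (A : Matrix (Fin n) (Fin n) ℝ) (hA : A.IsHermitian)

lemma aux_spectral :
    A = (hA.eigenvectorUnitary : Matrix (Fin n) (Fin n) ℝ) * diagonal hA.eigenvalues
      * (star (hA.eigenvectorUnitary : Matrix (Fin n) (Fin n) ℝ)) := by
  have := hA.spectral_theorem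
  simpa [RCLike.ofReal_real_eq_id] using this

lemma aux_trace_sq : (A * A).trace = ∑ i, hA.eigenvalues i ^ 2 := by
  set U : Matrix (Fin n) (Fin n) ℝ := (hA.eigenvectorUnitary : Matrix (Fin n) (Fin n) ℝ) with hU
  have h1 : star U * U = 1 := hA.eigenvectorUnitary.2.1
  have h1' : ∀ B : Matrix (Fin n) (Fin n) ℝ, star U * (U * B) = B := fun B => by
    rw [← Matrix.mul_assoc, h1, Matrix.one_mul]
  set D : Matrix (Fin n) (Fin n) ℝ := diagonal hA.eigenvalues with hD
  have hAe : A = U * D * star U := aux_spectral A hA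
  have step : (A * A).trace = (D * (star U * (U * (D * (star U * U))))).trace := by
    conv_lhs => rw [hAe]
    simp only [Matrix.mul_assoc]
    rw [Matrix.trace_mul_comm]
    simp only [Matrix.mul_assoc]
  rw [step]
  simp only [h1', h1, Matrix.mul_one]
  rw [hD, diagonal_mul_diagonal, trace_diagonal]
  exact Finset.sum_congr rfl fun i _ => (sq _).symm

lemma aux_rayleigh (t : ℝ) (ht : ∀ i, hA.eigenvalues i ≤ t) (x : Fin n → ℝ) :
    x ⬝ᵥ (A *ᵥ x) ≤ t * (x ⬝ᵥ x) := by
  set U : Matrix (Fin n) (Fin n) ℝ := (hA.eigenvectorUnitary : Matrix (Fin n) (Fin n) ℝ) with hU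
  have h2 : U * star U = 1 := hA.eigenvectorUnitary.2.2
  set D : Matrix (Fin n) (Fin n) ℝ := diagonal hA.eigenvalues with hD
  have hAe : A = U * D * star U := aux_spectral A hA
  have hsU : star U = Uᵀ := by
    rw [Matrix.star_eq_conjTranspose, Matrix.conjTranspose_eq_transpose_of_trivial]
  set y : Fin n → ℝ := x ᵥ* U with hy
  have hyx : (star U) *ᵥ x = y := by rw [hsU, Matrix.mulVec_transpose]
  have key : x ⬝ᵥ (A *ᵥ x) = ∑ i, hA.eigenvalues i * y i ^ 2 := by
    have h3 : x ⬝ᵥ (A *ᵥ x) = y ⬝ᵥ (D *ᵥ y) := by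
      conv_lhs => rw [hAe, ← Matrix.mulVec_mulVec, ← Matrix.mulVec_mulVec, hyx,
        Matrix.dotProduct_mulVec, ← hy]
    rw [h3, hD]
    simp only [dotProduct, Matrix.mulVec_diagonal]
    exact Finset.sum_congr rfl fun i _ => by ring
  have hyy : y ⬝ᵥ y = x ⬝ᵥ x := by
    have h4 : y ⬝ᵥ y = x ⬝ᵥ (U *ᵥ ((star U) *ᵥ x)) := by
      rw [hyx, Matrix.dotProduct_mulVec, ← hy]
    rw [h4, Matrix.mulVec_mulVec, h2, Matrix.one_mulVec]
  rw [key, ← hyy]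
  have h5 : t * (y ⬝ᵥ y) = ∑ i, t * y i ^ 2 := by
    simp [dotProduct, Finset.mul_sum, sq]
  rw [h5]
  exact Finset.sum_le_sum fun i _ => by
    have := ht i; nlinarith [sq_nonneg (y i)]

end general

set_option maxHeartbeats 1000000 in
/-- For any graph `G` on `n` vertices, the energy `E(G)`, i.e. the sum of the absolute
values of the adjacency eigenvalues, satisfies `E(G) ≤ (n/2) * (1 + √n)`
(Koolen–Moulton bound). -/
theorem energy_le_koolen_moulton (n : ℕ) (G : SimpleGraph (Fin n)) [DecidableRel G.Adj]
    (hA : (G.adjMatrix ℝ).IsHermitian) :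
    ∑ i, |hA.eigenvalues i| ≤ (n / 2 : ℝ) * (1 + Real.sqrt n) := by
  rcases Nat.eq_zero_or_pos n with h0 | hn
  · subst h0
    simp
  have hnR : (0:ℝ) < n := by exact_mod_cast hn
  set A : Matrix (Fin n) (Fin n) ℝ := G.adjMatrix ℝ with hAdef
  set ev : Fin n → ℝ := hA.eigenvalues with hev
  haveI hne : Nonempty (Fin n) := ⟨⟨0, hn⟩⟩
  obtain ⟨j₀, -, hj₀⟩ := Finset.exists_max_image (Finset.univ : Finset (Fin n)) ev Finset.univ_nonempty
  set t : ℝ := ev j₀ with htdef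
  set S : ℝ := ∑ i, ev i ^ 2 with hSdef
  -- S = trace (A*A) = number of ordered adjacent pairs = 1ᵀ A 1
  have hS_tr : S = (A * A).trace := (aux_trace_sq A hA).symm
  have htr_dot : (A * A).trace = (fun _ => (1:ℝ)) ⬝ᵥ (A *ᵥ fun _ => (1:ℝ)) := by
    simp only [Matrix.trace, Matrix.diag, Matrix.mul_apply, dotProduct, Matrix.mulVec,
      one_mul, mul_one]
    refine Finset.sum_congr rfl fun i _ => Finset.sum_congr rfl fun j _ => ?_
    by_cases h : G.Adj i j
    · simp [hAdef, SimpleGraph.adjMatrix_apply, h, G.adj_comm i j, h.symm]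
    · simp [hAdef, SimpleGraph.adjMatrix_apply, h]
  have hray := aux_rayleigh A hA t (fun i => hj₀ i (Finset.mem_univ i)) (fun _ => (1:ℝ))
  have hone : ((fun _ => (1:ℝ)) : Fin n → ℝ) ⬝ᵥ ((fun _ => (1:ℝ)) : Fin n → ℝ) = (n:ℝ) := by
    simp [dotProduct]
  have hSt : S ≤ t * n := by
    rw [hS_tr, htr_dot]
    rw [hone] at hray
    exact hray
  have htt : t ^ 2 ≤ S :=
    Finset.single_le_sum (f := fun i => ev i ^ 2) (fun i _ => sq_nonneg _) (Finset.mem_univ j₀)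
  have hS0 : 0 ≤ S := Finset.sum_nonneg fun i _ => sq_nonneg _
  have ht0 : 0 ≤ t := by nlinarith
  have htn : t ≤ n := by nlinarith
  set s : ℝ := Real.sqrt n with hsdef
  have hs2 : s ^ 2 = n := Real.sq_sqrt (le_of_lt hnR)
  have hs1 : 1 ≤ s := by
    rw [hsdef]
    rw [show (1:ℝ) = Real.sqrt 1 from (Real.sqrt_one).symm]
    exact Real.sqrt_le_sqrt (by exact_mod_cast hn)
  -- split the sum
  have hsplit : ∑ i, |ev i| = t + ∑ i ∈ Finset.univ.erase j₀, |ev i| := by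
    rw [← Finset.add_sum_erase _ _ (Finset.mem_univ j₀), abs_of_nonneg ht0]
  have hS_split : ∑ i ∈ Finset.univ.erase j₀, ev i ^ 2 = S - t ^ 2 := by
    have h : t ^ 2 + ∑ i ∈ Finset.univ.erase j₀, ev i ^ 2 = S :=
      Finset.add_sum_erase Finset.univ (fun i => ev i ^ 2) (Finset.mem_univ j₀)
    linarith
  -- Cauchy-Schwarz on the remaining eigenvalues
  have hcard : ((Finset.univ.erase j₀).card : ℝ) = (n:ℝ) - 1 := by
    rw [Finset.card_erase_of_mem (Finset.mem_univ j₀)]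
    simp [Nat.cast_sub hn]
  have hcs : (∑ i ∈ Finset.univ.erase j₀, |ev i|) ^ 2 ≤ ((n:ℝ) - 1) * (S - t ^ 2) := by
    have h := Finset.sum_mul_sq_le_sq_mul_sq (Finset.univ.erase j₀) (fun _ => (1:ℝ))
      (fun i => |ev i|)
    simp only [one_mul, one_pow, sq_abs] at h
    calc (∑ i ∈ Finset.univ.erase j₀, |ev i|) ^ 2
        ≤ (∑ _i ∈ Finset.univ.erase j₀, (1:ℝ)) * ∑ i ∈ Finset.univ.erase j₀, ev i ^ 2 := h
      _ = ((n:ℝ) - 1) * (S - t ^ 2) := by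
          rw [Finset.sum_const, nsmul_eq_mul, mul_one, hcard, hS_split]
  set Y : ℝ := (n / 2 : ℝ) * (1 + s) - t with hYdef
  have hY0 : 0 ≤ Y := by
    have h1 : (n:ℝ) / 2 * 1 ≤ (n:ℝ) / 2 * s :=
      mul_le_mul_of_nonneg_left hs1 (by positivity)
    rw [hYdef]; nlinarith [htn]
  have hXY : ((n:ℝ) - 1) * (S - t ^ 2) ≤ Y ^ 2 := by
    have hSt' : S ≤ t * s ^ 2 := by rw [hs2]; exact hSt
    have hq : (0:ℝ) ≤ (s ^ 2 - 1) * (s ^ 2 * t - S) :=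
      mul_nonneg (by nlinarith : (0:ℝ) ≤ s ^ 2 - 1) (by nlinarith : (0:ℝ) ≤ s ^ 2 * t - S)
    rw [hYdef, ← hs2]
    nlinarith [sq_nonneg (s * t - (s ^ 2 + s ^ 3) / 2), hq]
  have htail : ∑ i ∈ Finset.univ.erase j₀, |ev i| ≤ Y := by
    have h1 : (0:ℝ) ≤ ∑ i ∈ Finset.univ.erase j₀, |ev i| :=
      Finset.sum_nonneg fun i _ => abs_nonneg _
    nlinarith [hcs.trans hXY]
  rw [hsplit]
  rw [hYdef] at htail
  linarith
end

section
/- If a graph has exactly two distinct adjacency eigenvalues, then it is a disjoint union of complete graphs of a fixed order (with at least one edge). -/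
/-!
If `a` and `b` are the only eigenvalues of the adjacency matrix `A`, then `(A - a)(A - b) = 0`,
i.e. `A² = (a + b) A - ab`. On the diagonal this says that every vertex has degree `-ab`; at two
distinct non-adjacent vertices it says that they have no common neighbour. Hence "equal or
adjacent" is transitive, so every connected component is a clique. The graph has an edge because
the zero matrix has only one eigenvalue.
-/

open Finset Polynomial

theorem aeval_eq_zero_of_forall_mem_spectrum_isRoot {A : Type*} [Ring A] [StarRing A]
    [Algebra ℝ A] [TopologicalSpace A] [ContinuousFunctionalCalculus ℝ A IsSelfAdjoint]
    {a : A} (ha : IsSelfAdjoint a) {p : ℝ[X]} (hp : ∀ x ∈ spectrum ℝ a, p.IsRoot x) :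
    aeval a p = 0 := by
  rw [← cfc_polynomial p a, cfc_congr (g := 0) hp, cfc_zero]

namespace Matrix.IsHermitian

variable {n 𝕜 : Type*} [Fintype n] [DecidableEq n] [RCLike 𝕜] {A : Matrix n n 𝕜}

theorem mul_self_eq_of_forall_eigenvalues_eq_or_eq (hA : A.IsHermitian) {a b : ℝ}
    (h : ∀ i, hA.eigenvalues i = a ∨ hA.eigenvalues i = b) :
    A * A = (a + b) • A - (a * b) • 1 := by
  have hroot : ∀ x ∈ spectrum ℝ A, (X * X - C (a + b) * X + C (a * b)).IsRoot x := by
    rw [hA.spectrum_real_eq_range_eigenvalues]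
    rintro _ ⟨i, rfl⟩
    rcases h i with h | h <;> simp [h] <;> ring
  have := aeval_eq_zero_of_forall_mem_spectrum_isRoot hA.isSelfAdjoint hroot
  rw [map_add, map_sub, map_mul, map_mul, aeval_X, aeval_C, aeval_C, ← Algebra.smul_def,
    Algebra.algebraMap_eq_smul_one] at this
  rw [eq_sub_iff_add_eq, ← sub_eq_zero, ← this]
  abel

end Matrix.IsHermitian

namespace SimpleGraph

variable {V R : Type*} (G : SimpleGraph V)

theorem eq_or_adj_of_reachable (h : ∀ {u v w}, G.Adj u w → G.Adj w v → u = v ∨ G.Adj u v)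
    {u v : V} (huv : G.Reachable u v) : u = v ∨ G.Adj u v := by
  obtain ⟨p⟩ := huv
  induction p with
  | nil => exact .inl rfl
  | cons hxy _ ih =>
    rcases ih with rfl | hyz
    · exact .inr hxy
    · exact h hxy hyz

variable [Fintype V] [DecidableRel G.Adj]

theorem adjMatrix_mul_self_apply [NonAssocSemiring R] (u v : V) :
    (G.adjMatrix R * G.adjMatrix R) u v = #(G.commonNeighbors u v).toFinset := by
  simp only [Matrix.mul_apply, adjMatrix_apply, mul_boole, ← ite_and, sum_boole]
  congr 2
  ext w
  simp [mem_commonNeighbors, G.adj_comm w v, and_comm]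

variable [DecidableEq V] [Ring R] [CharZero R] {s t : R}

theorem degree_eq_of_adjMatrix_mul_self_eq
    (h : G.adjMatrix R * G.adjMatrix R = s • G.adjMatrix R - t • 1) (u v : V) :
    G.degree u = G.degree v := by
  have hdeg : ∀ v, (G.degree v : R) = -t := fun v => by
    simpa [G.adjMatrix_mul_self_apply_self] using congrFun (congrFun h v) v
  exact_mod_cast (hdeg u).trans (hdeg v).symm

theorem eq_or_adj_of_adj_of_adj_of_adjMatrix_mul_self_eq
    (h : G.adjMatrix R * G.adjMatrix R = s • G.adjMatrix R - t • 1) {u v w : V}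
    (huw : G.Adj u w) (hwv : G.Adj w v) : u = v ∨ G.Adj u v := by
  by_contra! hne
  have hcount : (#(G.commonNeighbors u v).toFinset : R) = 0 := by
    rw [← adjMatrix_mul_self_apply, h]
    simp [hne.1, hne.2]
  have hw : w ∈ (G.commonNeighbors u v).toFinset := by
    simpa [mem_commonNeighbors] using ⟨huw, hwv.symm⟩
  exact Nat.cast_ne_zero.mpr (card_ne_zero_of_mem hw) hcount

end SimpleGraph

/-- If a graph has exactly two distinct adjacency eigenvalues, then it is a disjoint
union of complete graphs of a fixed order `r ≥ 2`: every vertex has degree `r - 1` and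
any two distinct vertices in the same connected component are adjacent (so every
component is a complete graph `K_r`). -/
theorem two_distinct_eigenvalues_union_complete (n : ℕ) (G : SimpleGraph (Fin n))
    [DecidableRel G.Adj] (hA : (G.adjMatrix ℝ).IsHermitian)
    (h2 : (Finset.univ.image hA.eigenvalues).card = 2) :
    ∃ r : ℕ, 2 ≤ r ∧ (∀ v, G.degree v = r - 1) ∧
      ∀ u v, G.Reachable u v → u = v ∨ G.Adj u v := by
  obtain ⟨a, b, -, hspec⟩ := Finset.card_eq_two.mp h2
  have hev : ∀ i, hA.eigenvalues i = a ∨ hA.eigenvalues i = b := fun i => by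
    simpa [hspec] using Finset.mem_image_of_mem hA.eigenvalues (Finset.mem_univ i)
  have hquad := hA.mul_self_eq_of_forall_eigenvalues_eq_or_eq hev
  have hG : G ≠ ⊥ := by
    rintro rfl
    have hzero : hA.eigenvalues = 0 :=
      hA.eigenvalues_eq_zero_iff.mpr (by ext; simp [SimpleGraph.adjMatrix_apply])
    have : #(univ.image hA.eigenvalues) ≤ 1 := card_le_one.mpr (by simp [hzero])
    omega
  obtain ⟨u₀, w₀, hadj⟩ := G.ne_bot_iff_exists_adj.mp hG
  have hdeg_pos : 0 < G.degree u₀ := G.degree_pos_iff_exists_adj u₀ |>.mpr ⟨w₀, hadj⟩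
  refine ⟨G.degree u₀ + 1, by omega, fun v => ?_, fun u v => ?_⟩
  · simp [G.degree_eq_of_adjMatrix_mul_self_eq hquad v u₀]
  · exact G.eq_or_adj_of_reachable (G.eq_or_adj_of_adj_of_adj_of_adjMatrix_mul_self_eq hquad)
end
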